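/- For every pairwise nonnegative subset T of R = 𝒱″ ∪ 𝒧″ ∪ 𝒬″, the graph G_T (the simple graph with vertex set T in which distinct C, D ∈ T are adjacent if and only if ⟨C,D⟩ = 1) is acyclic, i.e., is a forest. (This reflects the fact that the connected components of each G_T are Dynkin diagrams of types A₁–A₅, D₄, D₅, or E₆, all of which are trees.) -/

import Mathlib

/-- `V = ℤ⁷`, with coordinate 0 corresponding to `L` and coordinates 1,…,6 to `E₁,…,E₆`. -/
abbrev V : Type := Fin 7 → ℤ

/-- The intersection form: `⟨x,y⟩ = x₀y₀ − Σᵢ xᵢyᵢ`. -/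
def form (x y : V) : ℤ := x 0 * y 0 - ∑ i : Fin 6, x i.succ * y i.succ

/-- The class `L` of a line. -/
def Lv : V := fun j => if j = 0 then 1 else 0

/-- The exceptional classes `E₁,…,E₆` (indexed by `Fin 6`). -/
def Ev (i : Fin 6) : V := fun j => if j = i.succ then 1 else 0

/-- The canonical class `K = −3L + E₁ + ⋯ + E₆`. -/
def Kv : V := -(3 : ℤ) • Lv + ∑ i : Fin 6, Ev i

/-- `𝒱″ = {Eᵢ − Eⱼ : 1 ≤ i < j ≤ 6}`. -/
def Vpp : Set V := {v | ∃ i j : Fin 6, i < j ∧ v = Ev i - Ev j}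

/-- `𝒧″ = {L − Eᵢ − Eⱼ − Eₖ : 1 ≤ i < j < k ≤ 6}`. -/
def Lpp : Set V := {v | ∃ i j k : Fin 6, i < j ∧ j < k ∧ v = Lv - Ev i - Ev j - Ev k}

/-- `𝒬″ = {2L − E₁ − ⋯ − E₆}`. -/
def Qpp : Set V := {v | v = (2 : ℤ) • Lv - ∑ i : Fin 6, Ev i}

/-- `R = 𝒱″ ∪ 𝒧″ ∪ 𝒬″`. -/
def Rset : Set V := Vpp ∪ Lpp ∪ Qpp

/-- A subset `T` is pairwise nonnegative if `⟨C,D⟩ ≥ 0` for all distinct `C,D ∈ T`. -/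
def PairwiseNonneg (T : Set V) : Prop := ∀ C ∈ T, ∀ D ∈ T, C ≠ D → 0 ≤ form C D

lemma form_comm (x y : V) : form x y = form y x := by
  simp [form, mul_comm]

/-- The graph `G_T`: vertices are the elements of `T`, and distinct `C, D ∈ T` are
adjacent if and only if `⟨C,D⟩ = 1`. -/
def GT (T : Set V) : SimpleGraph T where
  Adj C D := C ≠ D ∧ form (C : V) (D : V) = 1
  symm := by
    constructor
    rintro C D ⟨h1, h2⟩
    exact ⟨h1.symm, by rw [form_comm]; exact h2⟩
  loopless := by constructor; rintro C ⟨h, -⟩; exact h rfl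

/-!
If `G_T` had a cycle, let `S` be the sum of its vertices. Every vertex `c` of the cycle has
`⟨c, c⟩ = -2`, at least two neighbours `d` with `⟨c, d⟩ = 1`, and `⟨c, d⟩ ≥ 0` for the other
vertices, so `⟨c, S⟩ ≥ 0` and hence `⟨S, S⟩ ≥ 0`. But every element of `R` is orthogonal to the
canonical class `K`, and the form is negative definite on `K^⊥`, so `S = 0`. This is impossible
since all elements of `R` lie on the positive side of a common hyperplane `⟨·, W⟩ = 0`.
-/

open Finset

lemma form_sum_left {ι : Type*} (s : Finset ι) (f : ι → V) (y : V) :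
    form (∑ i ∈ s, f i) y = ∑ i ∈ s, form (f i) y := by
  simp only [form, Finset.sum_apply, sum_mul, sum_sub_distrib]
  rw [sum_comm]

lemma form_sum_right {ι : Type*} (y : V) (s : Finset ι) (f : ι → V) :
    form y (∑ i ∈ s, f i) = ∑ i ∈ s, form y (f i) := by
  simp only [form_comm y, form_sum_left]

lemma form_Kv (x : V) : form x Kv = -3 * x 0 - ∑ i : Fin 6, x i.succ := by
  simp [form, Kv, Lv, Ev, Finset.sum_apply, Fin.succ_ne_zero, (Fin.succ_ne_zero _).symm, mul_comm]

/-- By Cauchy–Schwarz, `(∑ xᵢ)² ≤ 6 ∑ xᵢ²`; on `K^⊥` the left side is `9 x₀²`. -/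
theorem eq_zero_of_form_Kv_eq_zero_of_form_self_nonneg {x : V} (hK : form x Kv = 0)
    (hx : 0 ≤ form x x) : x = 0 := by
  have hsum : ∑ i : Fin 6, x i.succ = -3 * x 0 := by rw [form_Kv] at hK; linarith
  have hCS := sq_sum_le_card_mul_sum_sq (s := univ) (f := fun i : Fin 6 => x i.succ)
  simp only [form, ← sq] at hx
  simp only [hsum, card_univ, Fintype.card_fin, Nat.cast_ofNat] at hCS
  have h0 : x 0 = 0 := pow_eq_zero_iff two_ne_zero |>.mp (by nlinarith [sq_nonneg (x 0)])
  have hsq : ∑ i : Fin 6, x i.succ ^ 2 = 0 :=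
    le_antisymm (by nlinarith) (sum_nonneg fun i _ => sq_nonneg _)
  rw [sum_eq_zero_iff_of_nonneg fun i _ => sq_nonneg _] at hsq
  funext j
  cases j using Fin.cases with
  | zero => exact h0
  | succ i => exact pow_eq_zero_iff two_ne_zero |>.mp (hsq i (mem_univ _))

/-- `R` is a system of positive roots of `E₆`, and `W` is a regular vector defining it. -/
def Wv : V := fun j => if j = 0 then 100 else (j : ℤ)

set_option maxRecDepth 8000 in
lemma form_self_of_mem_Rset {c : V} (hc : c ∈ Rset) : form c c = -2 := by
  rcases hc with (⟨i, j, hij, rfl⟩ | ⟨i, j, k, hij, hjk, rfl⟩) | rfl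
  · revert i j; decide
  · revert i j k; decide
  · decide

set_option maxRecDepth 8000 in
lemma form_Kv_of_mem_Rset {c : V} (hc : c ∈ Rset) : form c Kv = 0 := by
  rcases hc with (⟨i, j, hij, rfl⟩ | ⟨i, j, k, hij, hjk, rfl⟩) | rfl
  · revert i j; decide
  · revert i j k; decide
  · decide

set_option maxRecDepth 8000 in
lemma form_Wv_pos_of_mem_Rset {c : V} (hc : c ∈ Rset) : 0 < form c Wv := by
  rcases hc with (⟨i, j, hij, rfl⟩ | ⟨i, j, k, hij, hjk, rfl⟩) | rfl
  · revert i j; decide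
  · revert i j k; decide
  · decide

theorem SimpleGraph.Walk.IsCycle.two_le_card_adj_support {α : Type*} [DecidableEq α]
    {G : SimpleGraph α} [DecidableRel G.Adj] {u v : α} {p : G.Walk u u} (hp : p.IsCycle)
    (hv : v ∈ p.support) : 2 ≤ #{w ∈ p.support.toFinset | G.Adj v w} := by
  rw [← hp.ncard_neighborSet_toSubgraph_eq_two hv, ← Set.ncard_coe_finset]
  refine Set.ncard_le_ncard (fun w hw => ?_) (finite_toSet _)
  rw [mem_coe, mem_filter, List.mem_toFinset]
  exact ⟨p.mem_verts_toSubgraph.mp (p.toSubgraph.edge_vert hw.symm), hw.adj_sub⟩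

section GT

variable {T : Set V} [DecidableEq T] [DecidableRel (GT T).Adj]

lemma form_sum_nonneg_of_two_le_card_adj (hTR : T ⊆ Rset) (hT : PairwiseNonneg T)
    {s : Finset T} {c : T} (hc : c ∈ s) (h : 2 ≤ #{d ∈ s | (GT T).Adj c d}) :
    0 ≤ form c (∑ d ∈ s, (d : V)) := by
  have hsub : {d ∈ s | (GT T).Adj c d} ⊆ s.erase c := fun d hd => by
    rw [mem_filter] at hd
    exact mem_erase.mpr ⟨hd.2.1.symm, hd.1⟩
  calc 0 ≤ form c c + #{d ∈ s | (GT T).Adj c d} := by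
        rw [form_self_of_mem_Rset (hTR c.2)]; linarith
    _ = form c c + ∑ d ∈ s with (GT T).Adj c d, form c d := by
        rw [card_eq_sum_ones, Nat.cast_sum]
        exact congrArg _ (sum_congr rfl fun d hd => ((mem_filter.mp hd).2.2).symm)
    _ ≤ form c c + ∑ d ∈ s.erase c, form c d := by
        refine add_le_add_right (sum_le_sum_of_subset_of_nonneg hsub fun d hd _ => ?_) _
        exact hT c c.2 d d.2 fun h => (mem_erase.mp hd).1 (Subtype.ext h.symm)
    _ = form c (∑ d ∈ s, (d : V)) := by
        rw [form_sum_right, add_sum_erase s (fun d : T => form c d) hc]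

theorem exists_card_adj_lt_two (hTR : T ⊆ Rset) (hT : PairwiseNonneg T) {s : Finset T}
    (hs : s.Nonempty) : ∃ c ∈ s, #{d ∈ s | (GT T).Adj c d} < 2 := by
  by_contra! h
  have hS0 : ∑ c ∈ s, (c : V) = 0 := by
    refine eq_zero_of_form_Kv_eq_zero_of_form_self_nonneg ?_ ?_
    · rw [form_sum_left]
      exact sum_eq_zero fun c _ => form_Kv_of_mem_Rset (hTR c.2)
    · rw [form_sum_left]
      exact sum_nonneg fun c hc => form_sum_nonneg_of_two_le_card_adj hTR hT hc (h c hc)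
  have hSW : 0 < form (∑ c ∈ s, (c : V)) Wv := by
    rw [form_sum_left]
    exact sum_pos (fun c _ => form_Wv_pos_of_mem_Rset (hTR c.2)) hs
  rw [hS0] at hSW
  simp [form] at hSW

end GT

/-- for every pairwise nonnegative `T ⊆ R`, the graph `G_T` is acyclic
(a forest). -/
theorem GT_isAcyclic (T : Set V) (hTR : T ⊆ Rset) (hT : PairwiseNonneg T) :
    (GT T).IsAcyclic := by
  classical
  intro u p hp
  obtain ⟨c, hc, hlt⟩ := exists_card_adj_lt_two hTR hT (s := p.support.toFinset) ⟨u, by simp⟩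
  exact (hp.two_le_card_adj_support (List.mem_toFinset.mp hc)).not_gt hlt
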